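/- arXiv:1307.6935 — 7 statements merged into one kernel-verified Lean document; each statement's English description precedes it below -/
import Mathlib

section
/- Every k-tuple of positive integers (n_1,...,n_k) with k ≥ 2 satisfying [n_1,...,n_k] = 0 (admissible, Hirzebruch–Jung continued fraction equal to zero) can be obtained from the pair (1,1) by a finite sequence of strict blowups. -/
/-- Hirzebruch–Jung continued fraction `[n₁,…,n_k] = n₁ - 1/(n₂ - 1/(⋯ - 1/n_k))`,
evaluated from the right (with the convention `(0 : ℚ)⁻¹ = 0`, so `hjcf [n] = n`). -/
def hjcf : List ℤ → ℚ
  | [] => 0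
  | a :: l => (a : ℚ) - (hjcf l)⁻¹

/-- A tuple is admissible if all intermediate denominators `[n_j,…,n_k]` (for `j ≥ 2`)
are positive. -/
def Admissible (l : List ℤ) : Prop :=
  ∀ j : ℕ, 1 ≤ j → j < l.length → 0 < hjcf (l.drop j)

/-- Strict blowup at the `j`-th term (1-indexed): for `j ≤ r-1` it maps
`(n₁,…,n_r)` to `(n₁,…,n_{j-1}, n_j+1, 1, n_{j+1}+1, …, n_r)`;
for `j = r` it maps `(n₁,…,n_r)` to `(n₁,…,n_{r-1}, n_r+1, 1)`. -/
def psi : ℕ → List ℤ → List ℤ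
  | 0, l => l
  | 1, [] => []
  | 1, [a] => [a + 1, 1]
  | 1, a :: b :: t => (a + 1) :: 1 :: (b + 1) :: t
  | _ + 2, [] => []
  | j + 2, a :: t => a :: psi (j + 1) t

/-- `ReachesIn s a b` : `b` is obtained from `a` by a sequence of `s` strict blowups. -/
inductive ReachesIn : ℕ → List ℤ → List ℤ → Prop
  | refl (l : List ℤ) : ReachesIn 0 l l
  | step {s : ℕ} {a b : List ℤ} (j : ℕ) (hj : 1 ≤ j) (hj' : j ≤ b.length) :
      ReachesIn s a b → ReachesIn (s + 1) a (psi j b)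

/-- `uTuple l = (1,2,…,2,1)` of length `l ≥ 2`; `uTuple 1 = (0)`. -/
def uTuple (l : ℕ) : List ℤ :=
  if l ≤ 1 then [0] else 1 :: (List.replicate (l - 2) 2 ++ [1])

/-- Height: the minimal number of strict blowups needed to reach `n` from some `uTuple l`. -/
noncomputable def hgt (n : List ℤ) : ℕ :=
  sInf {s | ∃ l : ℕ, 1 ≤ l ∧ ReachesIn s (uTuple l) n}

/-- Derived tuple ("new framings after handle slides"): `n'_k = n_k` and
`n'_i = n_i + n'_{i+1} - 2`. -/
def derived : List ℤ → List ℤ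
  | [] => []
  | [a] => [a]
  | a :: b :: t => (a + (derived (b :: t)).headI - 2) :: derived (b :: t)

/-- Strict blowdown at the `(j+1)`-st term (the left inverse of `psi j`): it deletes the
entry at the `(j+1)`-st position and subtracts 1 from each adjacent incremented entry. -/
def bd : ℕ → List ℤ → List ℤ
  | 0, l => l
  | 1, [] => []
  | 1, [a] => [a]
  | 1, [a, _] => [a - 1]
  | 1, a :: _ :: c :: t => (a - 1) :: (c - 1) :: t
  | _ + 2, [] => []
  | j + 2, a :: t => a :: bd (j + 1) t

/-- One strict blowdown at the leftmost possible `1` (an entry `1` not in the first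
position); if there is none, do nothing. -/
def leftmostOneStep (l : List ℤ) : List ℤ :=
  match (l.drop 1).findIdx? (fun x => x == 1) with
  | some i => bd (i + 1) l
  | none => l

lemma hjcf_cons (a : ℤ) (l : List ℤ) : hjcf (a :: l) = (a : ℚ) - (hjcf l)⁻¹ := rfl

lemma psi_append (p s : List ℤ) : psi (p.length + 1) (p ++ s) = p ++ psi 1 s := by
  induction p with
  | nil => simp
  | cons a p ih =>
    show psi (p.length + 2) (a :: (p ++ s)) = a :: (p ++ psi 1 s)
    rw [show psi (p.length + 2) (a :: (p ++ s)) = a :: psi (p.length + 1) (p ++ s) from rfl, ih]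

lemma hjcf_append_congr (p s s' : List ℤ) (h : hjcf s = hjcf s') :
    hjcf (p ++ s) = hjcf (p ++ s') := by
  induction p with
  | nil => simpa using h
  | cons a p ih => simp [hjcf_cons, ih]

lemma one_lt_hjcf (l : List ℤ) (h2 : ∀ x ∈ l, 2 ≤ x) (hne : l ≠ []) : 1 < hjcf l := by
  induction l with
  | nil => simp at hne
  | cons a t ih =>
    have ha : (2:ℚ) ≤ (a:ℚ) := by exact_mod_cast h2 a (by simp)
    rcases eq_or_ne t [] with rfl | htne
    · rw [hjcf_cons]; simp [hjcf]; linarith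
    · have ht := ih (fun x hx => h2 x (by simp [hx])) htne
      have h1 : (hjcf t)⁻¹ < 1 := inv_lt_one_of_one_lt₀ ht
      have h0 : 0 < (hjcf t)⁻¹ := inv_pos.mpr (lt_trans one_pos ht)
      rw [hjcf_cons]; linarith

lemma no_adjacent_ones (q u : List ℤ) (hq : q ≠ [])
    (hadm : Admissible (q ++ 1 :: 1 :: u)) : False := by
  have hql : 1 ≤ q.length := List.length_pos_iff.mpr hq
  have hlen : (q ++ 1 :: 1 :: u).length = q.length + 2 + u.length := by simp; omega
  have e1 : (q ++ 1 :: 1 :: u).drop q.length = 1 :: 1 :: u := by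
    simpa using List.drop_append (l₁ := q) (l₂ := 1 :: 1 :: u) 0
  have e2 : (q ++ 1 :: 1 :: u).drop (q.length + 1) = 1 :: u := by
    simpa using List.drop_append (l₁ := q) (l₂ := 1 :: 1 :: u) 1
  have h1 : 0 < hjcf (1 :: 1 :: u) := by
    have := hadm q.length hql (by omega); rwa [e1] at this
  have h2 : 0 < hjcf (1 :: u) := by
    have := hadm (q.length + 1) (by omega) (by omega); rwa [e2] at this
  rw [hjcf_cons] at h1
  have hw : 1 < hjcf (1 :: u) := by
    by_contra h; push_neg at h
    have := (one_le_inv₀ h2).mpr h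
    push_cast at h1; linarith
  rw [hjcf_cons] at hw
  have hu : hjcf u < 0 := by
    apply inv_lt_zero.mp; push_cast at hw; linarith
  rcases eq_or_ne u [] with rfl | hune
  · simp [hjcf] at hu
  · have hul : 1 ≤ u.length := List.length_pos_iff.mpr hune
    have e3 : (q ++ 1 :: 1 :: u).drop (q.length + 2) = u := by
      simpa using List.drop_append (l₁ := q) (l₂ := 1 :: 1 :: u) 2
    have := hadm (q.length + 2) (by omega) (by omega)
    rw [e3] at this; linarith

lemma reach_aux : ∀ (k : ℕ) (n : List ℤ), n.length ≤ k → 2 ≤ n.length →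
    (∀ x ∈ n, 0 < x) → Admissible n → hjcf n = 0 → ∃ s, ReachesIn s [1, 1] n := by
  intro k
  induction k with
  | zero => intro n h h2 _ _ _; omega
  | succ k ih =>
    intro n hnk hlen hpos hadm hcf
    by_cases hl2 : n.length = 2
    · -- base case : n = [a, b] forces a = b = 1
      obtain ⟨a, b, rfl⟩ : ∃ a b, n = [a, b] := by
        rcases n with _ | ⟨a, _ | ⟨b, _ | _⟩⟩ <;> simp_all
      have ha : 0 < a := hpos a (by simp)
      have hb : 0 < b := hpos b (by simp)
      have hb0 : (b:ℚ) ≠ 0 := Int.cast_ne_zero.mpr (by omega)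
      rw [hjcf_cons, hjcf_cons] at hcf
      simp [hjcf] at hcf
      have hmul : (a:ℚ) * (b:ℚ) = 1 := by
        have h : (a:ℚ) = ((b:ℚ))⁻¹ := by linarith
        rw [h]; field_simp
      have hab : a * b = 1 := by exact_mod_cast hmul
      rcases Int.mul_eq_one_iff_eq_one_or_neg_one.mp hab with ⟨ha1, hb1⟩ | ⟨ha1, hb1⟩
      · subst ha1; subst hb1; exact ⟨0, ReachesIn.refl _⟩
      · omega
    · have hlen3 : 3 ≤ n.length := by omega
      -- find an entry equal to 1 beyond the first position
      obtain ⟨a, tl, rfl⟩ : ∃ a tl, n = a :: tl := by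
        cases n with
        | nil => simp at hlen
        | cons a tl => exact ⟨a, tl, rfl⟩
      have htlne : tl ≠ [] := by intro h; subst h; simp at hlen
      have hone : ∃ y ∈ tl, y = 1 := by
        by_contra h; push_neg at h
        have h2 : ∀ x ∈ tl, 2 ≤ x := fun x hx => by
          have := hpos x (by simp [hx]); have := h x hx; omega
        have h1 := one_lt_hjcf tl h2 htlne
        have ha : 1 ≤ a := hpos a (by simp)
        have hinv : (hjcf tl)⁻¹ < 1 := inv_lt_one_of_one_lt₀ h1
        have hinv0 : 0 < (hjcf tl)⁻¹ := inv_pos.mpr (lt_trans one_pos h1)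
        rw [hjcf_cons] at hcf
        have : (1:ℚ) ≤ (a:ℚ) := by exact_mod_cast ha
        linarith
      obtain ⟨y, hy, rfl⟩ := hone
      obtain ⟨q, r, hqr⟩ := List.append_of_mem hy
      subst hqr
      obtain ⟨p, x, hpx⟩ : ∃ p x, a :: q = p ++ [x] :=
        ⟨(a :: q).dropLast, (a :: q).getLast (by simp),
          (List.dropLast_append_getLast (by simp)).symm⟩
      have hn : a :: (q ++ 1 :: r) = p ++ x :: 1 :: r := by
        rw [show p ++ x :: 1 :: r = (p ++ [x]) ++ 1 :: r by simp, ← hpx]; simp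
      rw [hn] at hnk hlen hlen3 hpos hadm hcf ⊢
      clear hn hpx hy hl2 htlne
      rcases r with _ | ⟨c, t⟩
      · -- r = [] : n = p ++ [x, 1]
        have hlN : (p ++ [x, 1]).length = p.length + 2 := by simp
        have hpne : p ≠ [] := by intro h; subst h; simp at hlen3
        have hx0 : 0 < x := hpos x (by simp)
        have hx2 : 2 ≤ x := by
          by_contra h
          have hx1 : x = 1 := by omega
          subst hx1
          exact no_adjacent_ones p [] hpne hadm
        have key : hjcf [x - 1] = hjcf ([x, 1] : List ℤ) := by
          simp [hjcf]
        have hm_cf : hjcf (p ++ [x - 1]) = 0 := (hjcf_append_congr p _ _ key).trans hcf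
        have hm_pos : ∀ y ∈ p ++ [x - 1], 0 < y := by
          intro y hyy
          rcases List.mem_append.mp hyy with h | h
          · exact hpos y (by simp [h])
          · simp at h; omega
        have hm_adm : Admissible (p ++ [x - 1]) := by
          intro i hi1 hi2
          simp only [List.length_append, List.length_cons, List.length_nil] at hi2
          have hip : i ≤ p.length := by omega
          rw [List.drop_append_of_le_length hip,
            hjcf_append_congr (p.drop i) _ _ key,
            ← List.drop_append_of_le_length hip]
          exact hadm i hi1 (by omega)
        obtain ⟨s, hs⟩ := ih (p ++ [x - 1]) (by simp at hnk ⊢; omega) (by simp; omega)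
          hm_pos hm_adm hm_cf
        have hstep := ReachesIn.step (p.length + 1) (by omega) (by simp) hs
        rw [psi_append] at hstep
        refine ⟨s + 1, ?_⟩
        simpa [psi] using hstep
      · -- r = c :: t : n = p ++ x :: 1 :: c :: t
        have hlN : (p ++ x :: 1 :: c :: t).length = p.length + 3 + t.length := by simp; omega
        have e1 : (p ++ x :: 1 :: c :: t).drop (p.length + 1) = 1 :: c :: t := by
          simpa using List.drop_append (l₁ := p) (l₂ := x :: 1 :: c :: t) 1
        have e2 : (p ++ x :: 1 :: c :: t).drop (p.length + 2) = c :: t := by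
          simpa using List.drop_append (l₁ := p) (l₂ := x :: 1 :: c :: t) 2
        have hv0 : 0 < hjcf (c :: t) := by
          have := hadm (p.length + 2) (by omega) (by omega); rwa [e2] at this
        have h1v : 0 < 1 - (hjcf (c :: t))⁻¹ := by
          have := hadm (p.length + 1) (by omega) (by omega)
          rw [e1, hjcf_cons] at this; push_cast at this; linarith
        have hv : 1 < hjcf (c :: t) := by
          by_contra h; push_neg at h
          have := (one_le_inv₀ hv0).mpr h; linarith
        have hx0 : 0 < x := hpos x (by simp)
        have hx2 : 2 ≤ x := by
          by_contra h
          have hx1 : x = 1 := by omega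
          subst hx1
          rcases eq_or_ne p [] with rfl | hpne
          · simp only [List.nil_append] at hcf
            rw [hjcf_cons] at hcf
            have h1 : (hjcf (1 :: c :: t))⁻¹ = 1 := by push_cast at hcf; linarith
            have h2 : hjcf (1 :: c :: t) = 1 := inv_eq_one.mp h1
            rw [hjcf_cons] at h2
            have h3 : (hjcf (c :: t))⁻¹ = 0 := by push_cast at h2; linarith
            have h4 : hjcf (c :: t) = 0 := inv_eq_zero.mp h3
            linarith
          · exact no_adjacent_ones p (c :: t) hpne hadm
        have hc0 : 0 < c := hpos c (by simp)
        have hc2 : 2 ≤ c := by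
          by_contra h
          have hc1 : c = 1 := by omega
          subst hc1
          refine no_adjacent_ones (p ++ [x]) t (by simp) ?_
          rw [show (p ++ [x]) ++ 1 :: 1 :: t = p ++ x :: 1 :: 1 :: t by simp]
          exact hadm
        -- key value identity
        have keygen : ∀ u : ℚ, 1 < u → (x:ℚ) - 1 - (u - 1)⁻¹ = (x:ℚ) - (1 - u⁻¹)⁻¹ := by
          intro u hu
          have h0 : u ≠ 0 := by intro h; rw [h] at hu; norm_num at hu
          have h1 : u - 1 ≠ 0 := sub_ne_zero.mpr (ne_of_gt hu)
          field_simp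
          ring
        have key : hjcf ((x - 1) :: (c - 1) :: t) = hjcf (x :: 1 :: c :: t) := by
          rw [hjcf_cons, hjcf_cons, hjcf_cons, hjcf_cons, hjcf_cons]
          push_cast
          rw [show (c:ℚ) - 1 - (hjcf t)⁻¹ = ((c:ℚ) - (hjcf t)⁻¹) - 1 by ring]
          have hv' : 1 < (c:ℚ) - (hjcf t)⁻¹ := by rw [hjcf_cons] at hv; exact hv
          exact keygen _ hv'
        set m := p ++ (x - 1) :: (c - 1) :: t with hm
        have hm_len : m.length = p.length + 2 + t.length := by simp [hm]; omega
        have hm_cf : hjcf m = 0 := (hjcf_append_congr p _ _ key).trans hcf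
        have hm_pos : ∀ y ∈ m, 0 < y := by
          intro y hyy
          simp only [hm, List.mem_append, List.mem_cons] at hyy
          rcases hyy with h | h | h | h
          · exact hpos y (by simp [h])
          · omega
          · omega
          · exact hpos y (by simp [h])
        have hm_adm : Admissible m := by
          intro i hi1 hi2
          rw [hm_len] at hi2
          rcases lt_or_ge p.length i with hip | hip
          · rcases eq_or_lt_of_le (show p.length + 1 ≤ i by omega) with heq | hlt
            · -- i = p.length + 1
              rw [hm, ← heq]
              have em : (p ++ (x - 1) :: (c - 1) :: t).drop (p.length + 1)
                  = (c - 1) :: t := by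
                simpa using List.drop_append (l₁ := p) (l₂ := (x - 1) :: (c - 1) :: t) 1
              rw [em, hjcf_cons]
              rw [hjcf_cons] at hv
              push_cast
              linarith
            · -- i ≥ p.length + 2
              obtain ⟨d, rfl⟩ : ∃ d, i = p.length + 2 + d := ⟨i - p.length - 2, by omega⟩
              have em : m.drop (p.length + 2 + d) = t.drop d := by
                rw [hm, show p.length + 2 + d = p.length + (2 + d) by ring,
                  List.drop_append]
                rw [show 2 + d = d + 2 by ring]
                simp [List.drop_succ_cons]
              have en : (p ++ x :: 1 :: c :: t).drop (p.length + 3 + d) = t.drop d := by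
                rw [show p.length + 3 + d = p.length + (3 + d) by ring, List.drop_append]
                rw [show 3 + d = d + 3 by ring]
                simp [List.drop_succ_cons]
              rw [em, ← en]
              exact hadm (p.length + 3 + d) (by omega) (by omega)
          · rw [hm, List.drop_append_of_le_length hip,
              hjcf_append_congr (p.drop i) _ _ key,
              ← List.drop_append_of_le_length hip]
            exact hadm i hi1 (by omega)
        obtain ⟨s, hs⟩ := ih m (by simp at hnk; omega) (by omega) hm_pos hm_adm hm_cf
        have hstep := ReachesIn.step (p.length + 1) (by omega) (by omega) hs
        rw [hm, psi_append] at hstep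
        refine ⟨s + 1, ?_⟩
        simpa [psi] using hstep

/-- Every admissible k-tuple (k ≥ 2) of positive integers with Hirzebruch–Jung continued
fraction equal to zero is obtained from `(1,1)` by a finite sequence of strict blowups. -/
theorem pos_zero_cf_reached_from_one_one (n : List ℤ) (hlen : 2 ≤ n.length)
    (hpos : ∀ x ∈ n, 0 < x) (hadm : Admissible n) (hcf : hjcf n = 0) :
    ∃ s : ℕ, ReachesIn s [1, 1] n := by
  exact reach_aux n.length n le_rfl hlen hpos hadm hcf
end

section
/- If (n_1,...,n_r) is an admissible tuple of positive integers with [n_1,...,n_r] = 0, then any strict blowup of it at any term j (1 ≤ j ≤ r) is again admissible with Hirzebruch–Jung continued fraction equal to 0. -/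
lemma hjcf_cons_add (a c : ℤ) (l : List ℤ) : hjcf ((a + c) :: l) = hjcf (a :: l) + c := by
  simp only [hjcf_cons]; push_cast; ring

lemma admissible_cons (a : ℤ) (l : List ℤ) :
    Admissible (a :: l) ↔ Admissible l ∧ (l ≠ [] → 0 < hjcf l) := by
  constructor
  · intro h
    refine ⟨fun j hj hjl => ?_, fun hl => ?_⟩
    · simpa using h (j + 1) (by omega) (by simpa using hjl)
    · simpa using h 1 le_rfl (by simpa [List.length_pos_iff] using hl)
  · rintro ⟨hl, hpos⟩ (_ | _ | j) hj hjl
    · omega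
    · exact hpos (by rintro rfl; simp at hjl)
    · exact hl (j + 1) (by omega) (by simpa using hjl)

lemma admissible_cons_iff_of_tail (a b : ℤ) (l : List ℤ) :
    Admissible (a :: l) ↔ Admissible (b :: l) := by
  rw [admissible_cons, admissible_cons]

lemma hjcf_succ_one (a : ℤ) : hjcf [a + 1, 1] = hjcf [a] := by
  simp [hjcf]

lemma hjcf_one_cons_succ {b : ℤ} {l : List ℤ} (hx : 0 < hjcf (b :: l)) :
    hjcf (1 :: (b + 1) :: l) = hjcf (b :: l) / (hjcf (b :: l) + 1) := by
  rw [hjcf_cons, hjcf_cons_add]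
  field_simp
  push_cast
  ring

lemma hjcf_succ_one_succ (a : ℤ) {b : ℤ} {l : List ℤ} (hx : 0 < hjcf (b :: l)) :
    hjcf ((a + 1) :: 1 :: (b + 1) :: l) = hjcf (a :: b :: l) := by
  rw [hjcf_cons_add, hjcf_cons, hjcf_one_cons_succ hx, hjcf_cons a]
  field_simp
  ring

lemma hjcf_psi_and_admissible_psi {j : ℕ} {n : List ℤ} (hadm : Admissible n)
    (hj : 1 ≤ j) (hj' : j ≤ n.length) :
    hjcf (psi j n) = hjcf n ∧ Admissible (psi j n) := by
  fun_induction psi j n with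
  | case1 => omega
  | case2 => simp at hj'
  | case3 a =>
    refine ⟨hjcf_succ_one a, (admissible_cons _ _).2 ⟨?_, fun _ => by simp [hjcf]⟩⟩
    exact (admissible_cons _ _).2 ⟨fun _ _ h => by simp at h, by simp⟩
  | case4 a b t =>
    obtain ⟨hbt, hbt_pos⟩ := (admissible_cons a _).1 hadm
    have hx : 0 < hjcf (b :: t) := hbt_pos (List.cons_ne_nil _ _)
    refine ⟨hjcf_succ_one_succ a hx, (admissible_cons _ _).2 ⟨?_, fun _ => ?_⟩⟩
    · refine (admissible_cons _ _).2 ⟨(admissible_cons_iff_of_tail _ b t).2 hbt, fun _ => ?_⟩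
      rw [hjcf_cons_add]; positivity
    · rw [hjcf_one_cons_succ hx]; positivity
  | case5 => simp at hj'
  | case6 j a t ih =>
    obtain ⟨ht, hpos⟩ := (admissible_cons a t).1 hadm
    have ht_ne : t ≠ [] := by rintro rfl; simp at hj'
    obtain ⟨hval, hadm'⟩ := ih ht (by omega) (by simpa using hj')
    refine ⟨by rw [hjcf_cons, hjcf_cons, hval], (admissible_cons a _).2 ⟨hadm', fun _ => ?_⟩⟩
    exact hval ▸ hpos ht_ne

theorem psi_preserves_admissible_zero_general (n : List ℤ) (j : ℕ)
    (hadm : Admissible n) (hcf : hjcf n = 0)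
    (hj : 1 ≤ j) (hj' : j ≤ n.length) :
    Admissible (psi j n) ∧ hjcf (psi j n) = 0 := by
  obtain ⟨hval, hadm'⟩ := hjcf_psi_and_admissible_psi hadm hj hj'
  exact ⟨hadm', hval.trans hcf⟩

/-- A strict blowup of an admissible positive tuple with continued fraction zero is again
admissible with continued fraction zero. -/
theorem psi_preserves_admissible_zero (n : List ℤ) (j : ℕ)
    (hpos : ∀ x ∈ n, 0 < x) (hadm : Admissible n) (hcf : hjcf n = 0)
    (hj : 1 ≤ j) (hj' : j ≤ n.length) :
    Admissible (psi j n) ∧ hjcf (psi j n) = 0 :=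
  psi_preserves_admissible_zero_general n j hadm hcf hj hj'
end

section
/- Define new framings n'_i by the recursion n'_k = n_k and n'_i = n_i + n'_{i+1} - 2 for 1 ≤ i ≤ k-1. If (n_1,...,n_k) is obtained from some tuple by the standard handle-slide process and one performs a strict blowup at the j-th term (1 ≤ j ≤ r-1), then the derived framings transform as: ((n_1,...,n_{j-1}, n_j+1, 1, n_{j+1}+1, n_{j+2},...,n_r))' = (n'_1+1,...,n'_{j-1}+1, n'_j+1, n'_{j+1}, n'_{j+1}+1, n'_{j+2},...,n'_r). -/
lemma derived_length (l : List ℤ) : (derived l).length = l.length := by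
  match l with
  | [] => rfl
  | [a] => rfl
  | a :: b :: t => simp [derived, derived_length (b :: t)]

lemma derived_ne_nil {l : List ℤ} (h : l ≠ []) : derived l ≠ [] := by
  intro hc
  apply h
  have := derived_length l
  rw [hc] at this
  exact List.length_eq_zero_iff.mp this.symm

lemma derived_head_add (b : ℤ) (t : List ℤ) :
    derived ((b + 1) :: t) = ((derived (b :: t)).headI + 1) :: (derived (b :: t)).tail := by
  cases t with
  | nil => simp [derived]
  | cons c t' =>
    simp only [derived, List.headI, List.tail]
    congr 1
    ring

/-- Under a strict blowup at the `j`-th term (`1 ≤ j ≤ r-1`) the derived framings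
transform as
`(n₁,…,n_{j-1}, n_j+1, 1, n_{j+1}+1, …, n_r)' =
 (n'₁+1,…,n'_{j-1}+1, n'_j+1, n'_{j+1}, n'_{j+1}+1, n'_{j+2},…,n'_r)`. -/
theorem derived_psi_interior (n : List ℤ) (j : ℕ) (hj : 1 ≤ j) (hj' : j < n.length) :
    derived (psi j n) =
      ((derived n).take j).map (· + 1) ++
        (derived n).getD j 0 :: ((derived n).getD j 0 + 1) :: (derived n).drop (j + 1) := by
  induction j generalizing n with
  | zero => omega
  | succ j ih =>
    match j, n with
    | 0, [] => simp at hj'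
    | 0, [a] => simp at hj'
    | 0, a :: b :: t =>
      have hd := derived_head_add b t
      simp only [psi, derived, hd, List.headI, List.take, List.map, List.getD, List.getElem?_cons,
        List.drop, List.tail]
      cases t with
      | nil =>
        simp [derived]
        constructor <;> ring
      | cons c t' =>
        simp [derived]
        refine ⟨by ring, by ring⟩
    | j + 1, [] => simp at hj'
    | j + 1, [a] => simp at hj'
    | j + 1, a :: b :: t =>
      have hlen : j + 1 < (b :: t).length := by
        simpa using Nat.lt_of_succ_lt_succ hj'
      have IH := ih (b :: t) (Nat.le_add_left 1 j) hlen
      have hne : derived (b :: t) ≠ [] := derived_ne_nil (by simp)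
      have hlen' : j + 1 < (derived (b :: t)).length := by
        rwa [derived_length]
      have hne2 : derived (psi (j + 1) (b :: t)) ≠ [] := by
        rw [IH]
        cases h : (derived (b :: t)).take (j + 1) with
        | nil => simp [h]
        | cons x xs => simp
      have hhead : (derived (psi (j + 1) (b :: t))).headI = (derived (b :: t)).headI + 1 := by
        rw [IH]
        obtain ⟨x, xs, hx⟩ := List.exists_cons_of_ne_nil hne
        have htake : (derived (b :: t)).take (j + 1) = x :: xs.take j := by
          rw [hx]; rfl
        rw [htake, hx]
        rfl
      show derived (a :: psi (j + 1) (b :: t)) = _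
      obtain ⟨x, xs, hx⟩ := List.exists_cons_of_ne_nil hne2
      have hdL : derived (a :: psi (j + 1) (b :: t)) =
          (a + (derived (psi (j + 1) (b :: t))).headI - 2) ::
            derived (psi (j + 1) (b :: t)) := by
        cases hpsi : psi (j + 1) (b :: t) with
        | nil => exact absurd (by rw [hpsi]; rfl) hne2
        | cons y ys => rfl
      rw [hdL, hhead, IH]
      have hdn : derived (a :: b :: t) =
          (a + (derived (b :: t)).headI - 2) :: derived (b :: t) := rfl
      rw [hdn]
      simp only [List.take_succ_cons, List.map_cons, List.getD, List.getElem?_cons_succ,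
        List.drop_succ_cons, List.cons_append]
      congr 1
      ring
end

section
/- If (n_1,...,n_k) ∈ Z_k is a tuple of positive integers with k ≥ 3 and hgt(n) ≥ 1, then n contains at least one entry n_j equal to 1 with 1 < j < k (i.e., an interior entry equal to 1) unless n = u_k = (1,2,...,2,1). -/
section SubInv

variable {K : Type*} [Field K] [LinearOrder K] [IsStrictOrderedRing K] {a r c : K}

lemma le_sub_inv_of_add_one_le (ha : c + 1 ≤ a) (hr : 1 ≤ r) : c ≤ a - r⁻¹ := by
  linarith [inv_le_one_of_one_le₀ hr]

lemma eq_add_one_and_eq_one_of_sub_inv_eq (ha : c + 1 ≤ a) (hr : 1 ≤ r) (h : a - r⁻¹ = c) :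
    a = c + 1 ∧ r = 1 := by
  have hinv : r⁻¹ = 1 := le_antisymm (inv_le_one_of_one_le₀ hr) (by linarith)
  exact ⟨by linarith, inv_eq_one.mp hinv⟩

end SubInv

section HJCF

variable {m : List ℤ} {b : ℤ}

lemma one_le_hjcf_append_singleton (hm : ∀ x ∈ m, 2 ≤ x) (hb : 1 ≤ b) :
    1 ≤ hjcf (m ++ [b]) := by
  induction m with
  | nil => simpa [hjcf] using (by exact_mod_cast hb : (1 : ℚ) ≤ b)
  | cons a m ih =>
    have ha : ((1 : ℚ) + 1) ≤ a := mod_cast hm a (by simp)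
    exact le_sub_inv_of_add_one_le ha (ih fun x hx ↦ hm x (by simp [hx]))

lemma hjcf_append_singleton_eq_one (hm : ∀ x ∈ m, 2 ≤ x) (hb : 1 ≤ b)
    (h : hjcf (m ++ [b]) = 1) : m = List.replicate m.length 2 ∧ b = 1 := by
  induction m with
  | nil => simpa [hjcf] using h
  | cons a m ih =>
    have hm' : ∀ x ∈ m, 2 ≤ x := fun x hx ↦ hm x (by simp [hx])
    have ha : ((1 : ℚ) + 1) ≤ a := mod_cast hm a (by simp)
    obtain ⟨ha2, htail⟩ := eq_add_one_and_eq_one_of_sub_inv_eq ha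
      (one_le_hjcf_append_singleton hm' hb) h
    obtain ⟨hrep, rfl⟩ := ih hm' htail
    refine ⟨?_, rfl⟩
    rw [List.length_cons, List.replicate_succ, ← hrep, show a = 2 by exact_mod_cast ha2]

end HJCF

lemma two_le_of_mem_interior {a b : ℤ} {m : List ℤ} (hpos : ∀ x ∈ a :: (m ++ [b]), 0 < x)
    (hone : ∀ j, 1 ≤ j → j < m.length + 1 → (a :: (m ++ [b])).getD j 0 ≠ 1) :
    ∀ x ∈ m, 2 ≤ x := by
  intro x hx
  obtain ⟨i, hi, rfl⟩ := List.mem_iff_getElem.mp hx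
  have hne := hone (i + 1) (by omega) (by omega)
  rw [List.getD_cons_succ, List.getD_eq_getElem _ _ (by simp; omega),
    List.getElem_append_left hi] at hne
  have := hpos m[i] (by simp [List.getElem_mem])
  omega

theorem exists_interior_one_general (n : List ℤ) (k : ℕ) (hk : n.length = k) (hk3 : 3 ≤ k)
    (hpos : ∀ x ∈ n, 0 < x) (hcf : hjcf n = 0) :
    n = uTuple k ∨ ∃ j : ℕ, 1 ≤ j ∧ j < k - 1 ∧ n.getD j 0 = 1 := by
  refine or_iff_not_imp_right.mpr fun hone ↦ ?_
  push Not at hone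
  obtain ⟨a, m, b, rfl⟩ : ∃ a m b, n = a :: (m ++ [b]) := by
    obtain _ | ⟨a, l⟩ := n
    · simp at hk; omega
    obtain rfl | ⟨m, b, rfl⟩ := l.eq_nil_or_concat'
    · simp at hk; omega
    exact ⟨a, m, b, rfl⟩
  obtain rfl : k = m.length + 2 := by simp at hk; omega
  have hm := two_le_of_mem_interior hpos fun j h1 h2 ↦ hone j h1 (by omega)
  have hb : 1 ≤ b := hpos b (by simp)
  have ha : ((0 : ℚ) + 1) ≤ a := mod_cast hpos a (by simp)
  obtain ⟨ha1, htail⟩ := eq_add_one_and_eq_one_of_sub_inv_eq ha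
    (one_le_hjcf_append_singleton hm hb) hcf
  obtain ⟨hrep, rfl⟩ := hjcf_append_singleton_eq_one hm hb htail
  rw [uTuple, if_neg (by omega), Nat.add_sub_cancel, ← hrep, show a = 1 by exact_mod_cast ha1]

/-- A positive tuple in `Z_k` (`k ≥ 3`) of height at least 1 contains an interior entry
equal to `1`, unless it equals `u_k = (1,2,…,2,1)`. -/
theorem exists_interior_one (n : List ℤ) (k : ℕ) (hk : n.length = k) (hk3 : 3 ≤ k)
    (hpos : ∀ x ∈ n, 0 < x) (hadm : Admissible n) (hcf : hjcf n = 0)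
    (hhgt : 1 ≤ hgt n) :
    n = uTuple k ∨ ∃ j : ℕ, 1 ≤ j ∧ j < k - 1 ∧ n.getD j 0 = 1 :=
  exists_interior_one_general n k hk hk3 hpos hcf
end

section
/- If p/q = [a_1,...,a_l] and p/(p-q) = [b_1,...,b_k] are the Hirzebruch–Jung continued fraction expansions with all a_i, b_j ≥ 2, then Σ_{i=1}^l (a_i - 1) = k + l - 1 and Σ_{j=1}^k (b_j - 1) = k + l - 1. -/
lemma hjcf_nil : hjcf [] = 0 := rfl
lemma hjcf_bounds : ∀ (l : List ℤ), l ≠ [] → (∀ y ∈ l, 2 ≤ y) →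
    (l.headI : ℚ) - 1 < hjcf l ∧ hjcf l ≤ (l.headI : ℚ) ∧ 1 < hjcf l := by
  intro l
  induction l with
  | nil => simp
  | cons a t ih =>
    intro _ h2
    have ha2 : (2:ℚ) ≤ (a:ℚ) := by exact_mod_cast h2 a List.mem_cons_self
    cases t with
    | nil =>
      simp only [hjcf_cons, hjcf_nil, inv_zero, sub_zero, List.headI]
      refine ⟨by linarith, le_refl _, by linarith⟩
    | cons x t' =>
      have h := ih (by simp) (fun y hy => h2 y (List.mem_cons_of_mem _ hy))
      have h1 : 1 < hjcf (x :: t') := h.2.2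
      have hinv0 : 0 < (hjcf (x :: t'))⁻¹ := inv_pos.mpr (by linarith)
      have hinv1 : (hjcf (x :: t'))⁻¹ < 1 := by
        rw [inv_lt_one_iff₀]; right; exact h1
      rw [hjcf_cons a (x :: t')]
      simp only [List.headI]
      refine ⟨by linarith, by linarith, by linarith⟩

lemma hjcf_eq_int {l : List ℤ} (hl : l ≠ []) (h2 : ∀ x ∈ l, 2 ≤ x) {m : ℤ}
    (h : hjcf l = (m : ℚ)) : l = [m] := by
  obtain ⟨a, t, rfl⟩ := List.exists_cons_of_ne_nil hl
  have hb := hjcf_bounds (a :: t) hl h2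
  simp only [List.headI] at hb
  have ham : a = m := by
    have h1 : (a:ℚ) - 1 < (m:ℚ) := h ▸ hb.1
    have h2' : (m:ℚ) ≤ (a:ℚ) := h ▸ hb.2.1
    have : (a:ℤ) - 1 < m ∧ m ≤ a := ⟨by exact_mod_cast h1, by exact_mod_cast h2'⟩
    omega
  subst ham
  have ht : t = [] := by
    cases t with
    | nil => rfl
    | cons x t' =>
      exfalso
      have h1 : 1 < hjcf (x :: t') :=
        (hjcf_bounds (x :: t') (by simp) (fun y hy => h2 y (List.mem_cons_of_mem _ hy))).2.2
      have : (hjcf (x :: t'))⁻¹ = 0 := by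
        have := hjcf_cons a (x :: t')
        rw [h] at this
        linarith [this]
      rw [inv_eq_zero] at this
      linarith
  rw [ht]


lemma riemen_aux : ∀ (n : ℕ) (p q : ℤ), p.toNat ≤ n → 1 ≤ q → q < p → Int.gcd p q = 1 →
    ∀ (a b : List ℤ), a ≠ [] → b ≠ [] → (∀ x ∈ a, 2 ≤ x) → (∀ x ∈ b, 2 ≤ x) →
    hjcf a = (p : ℚ) / (q : ℚ) → hjcf b = (p : ℚ) / ((p : ℚ) - (q : ℚ)) →
    a.sum - (a.length : ℤ) = (b.length : ℤ) + (a.length : ℤ) - 1 ∧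
      b.sum - (b.length : ℤ) = (b.length : ℤ) + (a.length : ℤ) - 1 := by
  intro n
  induction n with
  | zero => intro p q hn hq hqp; exfalso; omega
  | succ n ih =>
    intro p q hn hq hqp hcop a b ha hb ha2 hb2 hcfa hcfb
    have hq0 : (0:ℚ) < (q:ℚ) := by exact_mod_cast hq
    have hqpQ : (q:ℚ) < (p:ℚ) := by exact_mod_cast hqp
    have hp0 : (0:ℚ) < (p:ℚ) := by linarith
    have hpq0 : (0:ℚ) < (p:ℚ) - (q:ℚ) := by linarith
    obtain ⟨a1, t, rfl⟩ := List.exists_cons_of_ne_nil ha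
    obtain ⟨b1, s, rfl⟩ := List.exists_cons_of_ne_nil hb
    have hA := hjcf_bounds (a1 :: t) ha ha2
    have hB := hjcf_bounds (b1 :: s) hb hb2
    simp only [List.headI] at hA hB
    rcases lt_trichotomy (2*q) p with hcase | hcase | hcase
    · -- 2q < p : a1 ≥ 3, b1 = 2
      have hcQ : 2*(q:ℚ) < (p:ℚ) := by exact_mod_cast hcase
      have hagt2 : (2:ℚ) < hjcf (a1 :: t) := by
        rw [hcfa, lt_div_iff₀ hq0]; linarith
      have ha1: (3:ℤ) ≤ a1 := by
        have : (2:ℚ) < (a1:ℚ) := lt_of_lt_of_le hagt2 hA.2.1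
        exact_mod_cast this
      -- b1 = 2 and s ≠ []
      have hblt2 : hjcf (b1 :: s) < 2 := by
        rw [hcfb, div_lt_iff₀ hpq0]; linarith
      have hb1 : b1 = 2 := by
        have h1 : (b1:ℚ) - 1 < 2 := lt_trans hB.1 hblt2
        have : (b1:ℚ) - 1 < (2:ℚ) := h1
        have hb1' : b1 - 1 < 2 := by exact_mod_cast this
        have := hb2 b1 List.mem_cons_self
        omega
      have hs : s ≠ [] := by
        intro hsnil
        rw [hsnil] at hblt2
        rw [hjcf_cons, hjcf_nil, inv_zero, sub_zero] at hblt2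
        have := hb2 b1 List.mem_cons_self
        have : (2:ℚ) ≤ (b1:ℚ) := by exact_mod_cast this
        linarith
      have hs2 : ∀ x ∈ s, 2 ≤ x := fun y hy => hb2 y (List.mem_cons_of_mem _ hy)
      have hsb := hjcf_bounds s hs hs2
      have hs1 : 1 < hjcf s := hsb.2.2
      -- value of hjcf s
      have hcfs : hjcf s = ((p:ℚ) - q) / ((p:ℚ) - 2*q) := by
        have he : (b1:ℚ) - (hjcf s)⁻¹ = (p:ℚ) / ((p:ℚ) - q) := by
          rw [← hjcf_cons]; exact hcfb
        rw [hb1] at he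
        have hinv : (hjcf s)⁻¹ = ((p:ℚ) - 2*q) / ((p:ℚ) - q) := by
          push_cast at he ⊢
          field_simp at he ⊢
          linarith
        have h2q0 : (0:ℚ) < (p:ℚ) - 2*q := by linarith
        rw [← inv_inv (hjcf s), hinv, inv_div]
      -- tail value
      have hcft : hjcf ((a1 - 1) :: t) = ((p:ℚ) - q) / (q:ℚ) := by
        rw [hjcf_cons]
        rw [hjcf_cons] at hcfa
        push_cast
        have hd : ((p:ℚ) - q)/q = (p:ℚ)/q - 1 := by field_simp
        rw [hd, ← hcfa]; ring
      have hgcd : Int.gcd (p - q) q = 1 := by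
        obtain ⟨u, v, huv⟩ := Int.isCoprime_iff_gcd_eq_one.mpr hcop
        exact Int.isCoprime_iff_gcd_eq_one.mp ⟨u, v + u, by linear_combination huv⟩
      have hIH := ih (p - q) q (by omega) hq (by omega) hgcd ((a1 - 1) :: t) s
        (by simp) hs
        (by intro x hx; rcases List.mem_cons.mp hx with h | h
            · omega
            · exact ha2 x (List.mem_cons_of_mem _ h))
        hs2
        (by push_cast; exact hcft)
        (by push_cast; rw [hcfs]; ring_nf)
      obtain ⟨h1, h2⟩ := hIH
      simp only [List.sum_cons, List.length_cons] at h1 h2 ⊢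
      push_cast at h1 h2 ⊢
      constructor <;> linarith
    · -- p = 2q ⇒ q = 1, p = 2
      have hq1 : q = 1 := by
        have hdvd : q.natAbs ∣ Int.gcd p q := Nat.dvd_gcd
          (Int.natAbs_dvd_natAbs.mpr ⟨2, by omega⟩) dvd_rfl
        rw [hcop] at hdvd
        have := Nat.dvd_one.mp hdvd
        omega
      have hp2 : p = 2 := by omega
      subst hq1; subst hp2
      have hcfa2 : hjcf (a1 :: t) = ((2:ℤ) : ℚ) := by rw [hcfa]; norm_num
      have hcfb2 : hjcf (b1 :: s) = ((2:ℤ) : ℚ) := by rw [hcfb]; norm_num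
      have hae := hjcf_eq_int ha ha2 hcfa2
      have hbe := hjcf_eq_int hb hb2 hcfb2
      rw [List.cons.injEq] at hae hbe
      obtain ⟨rfl, rfl⟩ := hae
      obtain ⟨rfl, rfl⟩ := hbe
      norm_num
    · -- p < 2q : a1 = 2, t ≠ [], b1 ≥ 3
      have hcQ : (p:ℚ) < 2*(q:ℚ) := by exact_mod_cast hcase
      have halt2 : hjcf (a1 :: t) < 2 := by
        rw [hcfa, div_lt_iff₀ hq0]; linarith
      have ha1 : a1 = 2 := by
        have h1 : (a1:ℚ) - 1 < 2 := lt_trans hA.1 halt2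
        have ha1' : a1 - 1 < 2 := by exact_mod_cast h1
        have := ha2 a1 List.mem_cons_self
        omega
      have ht : t ≠ [] := by
        intro htnil
        rw [htnil] at halt2
        rw [hjcf_cons, hjcf_nil, inv_zero, sub_zero] at halt2
        have := ha2 a1 List.mem_cons_self
        have : (2:ℚ) ≤ (a1:ℚ) := by exact_mod_cast this
        linarith
      have ht2 : ∀ x ∈ t, 2 ≤ x := fun y hy => ha2 y (List.mem_cons_of_mem _ hy)
      have htb := hjcf_bounds t ht ht2
      have ht1 : 1 < hjcf t := htb.2.2
      have hbgt2 : (2:ℚ) < hjcf (b1 :: s) := by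
        rw [hcfb, lt_div_iff₀ hpq0]; linarith
      have hb1 : (3:ℤ) ≤ b1 := by
        have : (2:ℚ) < (b1:ℚ) := lt_of_lt_of_le hbgt2 hB.2.1
        exact_mod_cast this
      have h2qp0 : (0:ℚ) < 2*(q:ℚ) - p := by linarith
      -- value of hjcf t
      have hcft : hjcf t = (q:ℚ) / (2*(q:ℚ) - p) := by
        have he : (a1:ℚ) - (hjcf t)⁻¹ = (p:ℚ) / (q:ℚ) := by
          rw [← hjcf_cons]; exact hcfa
        rw [ha1] at he
        have hinv : (hjcf t)⁻¹ = (2*(q:ℚ) - p) / (q:ℚ) := by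
          push_cast at he ⊢
          field_simp at he ⊢
          linarith
        rw [← inv_inv (hjcf t), hinv, inv_div]
      have hcfb' : hjcf ((b1 - 1) :: s) = (q:ℚ) / ((p:ℚ) - q) := by
        rw [hjcf_cons]
        rw [hjcf_cons] at hcfb
        push_cast
        field_simp at hcfb ⊢
        linarith
      have hgcd : Int.gcd q (2*q - p) = 1 := by
        obtain ⟨u, v, huv⟩ := Int.isCoprime_iff_gcd_eq_one.mpr hcop
        exact Int.isCoprime_iff_gcd_eq_one.mp ⟨v + 2*u, -u, by linear_combination huv⟩
      have hIH := ih q (2*q - p) (by omega) (by omega) (by omega) hgcd t ((b1 - 1) :: s)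
        ht (by simp) ht2
        (by intro x hx; rcases List.mem_cons.mp hx with h | h
            · omega
            · exact hb2 x (List.mem_cons_of_mem _ h))
        (by push_cast; rw [hcft]; try ring_nf)
        (by push_cast
            rw [hcfb']
            congr 1
            push_cast
            ring)
      obtain ⟨h1, h2⟩ := hIH
      simp only [List.sum_cons, List.length_cons] at h1 h2 ⊢
      push_cast at h1 h2 ⊢
      constructor <;> linarith

/-- Riemenschneider duality: if `p/q = [a₁,…,a_l]` and `p/(p-q) = [b₁,…,b_k]` with all
entries `≥ 2`, then `Σ(aᵢ - 1) = k + l - 1` and `Σ(bⱼ - 1) = k + l - 1`. -/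
theorem riemenschneider_sums (p q : ℤ) (hq : 1 ≤ q) (hqp : q < p)
    (hcop : Int.gcd p q = 1) (a b : List ℤ) (ha : a ≠ []) (hb : b ≠ [])
    (ha2 : ∀ x ∈ a, 2 ≤ x) (hb2 : ∀ x ∈ b, 2 ≤ x)
    (hcfa : hjcf a = (p : ℚ) / (q : ℚ)) (hcfb : hjcf b = (p : ℚ) / ((p : ℚ) - (q : ℚ))) :
    a.sum - (a.length : ℤ) = (b.length : ℤ) + (a.length : ℤ) - 1 ∧
      b.sum - (b.length : ℤ) = (b.length : ℤ) + (a.length : ℤ) - 1 := by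
  exact riemen_aux p.toNat p q le_rfl hq hqp hcop a b ha hb ha2 hb2 hcfa hcfb
end

section
/- For every k ≥ 1 and every tuple (b_1,...,b_k) with all b_i ≥ 2 arising as the continued fraction expansion p/(p-q) = [b_1,...,b_k], there exists an admissible k-tuple n of nonnegative integers with [n_1,...,n_k] = 0 and 0 ≤ n_i ≤ b_i for all i; that is, the set Z_k(p/(p-q)) = { n ∈ Z_k : 0 ≤ n_i ≤ b_i for all i } is nonempty. -/
lemma hjT : ∀ m : ℕ, hjcf (List.replicate m 2 ++ [1]) = 1 := by
  intro m
  induction m with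
  | zero => simp [hjcf]
  | succ m ih =>
      rw [List.replicate_succ, List.cons_append]
      rw [show hjcf (2 :: (List.replicate m 2 ++ [1])) =
        (2 : ℚ) - (hjcf (List.replicate m 2 ++ [1]))⁻¹ from rfl, ih]
      norm_num

lemma dropT (m j : ℕ) (h : j ≤ m) :
    (List.replicate m 2 ++ ([1] : List ℤ)).drop j = List.replicate (m - j) 2 ++ [1] := by
  rw [List.drop_append, List.drop_replicate]
  simp [Nat.sub_eq_zero_of_le h]

/-- `Z_k(p/(p-q))` is nonempty: whenever `p/(p-q) = [b₁,…,b_k]` with all `bᵢ ≥ 2`, there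
is an admissible tuple of nonnegative integers of the same length with continued fraction
zero whose entries are bounded by the `bᵢ`. -/
theorem Zk_nonempty (p q : ℤ) (hq : 1 ≤ q) (hqp : q < p) (hcop : Int.gcd p q = 1)
    (b : List ℤ) (hb : b ≠ []) (hb2 : ∀ x ∈ b, 2 ≤ x)
    (hcfb : hjcf b = (p : ℚ) / ((p : ℚ) - (q : ℚ))) :
    ∃ n : List ℤ, n.length = b.length ∧ (∀ x ∈ n, 0 ≤ x) ∧ Admissible n ∧
      hjcf n = 0 ∧ ∀ i < n.length, n.getD i 0 ≤ b.getD i 0 := by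
  have hk : 0 < b.length := List.length_pos_iff.mpr hb
  have hbge : ∀ i, i < b.length → (2 : ℤ) ≤ b.getD i 0 := by
    intro i hi
    rw [List.getD_eq_getElem b 0 hi]
    exact hb2 _ (List.getElem_mem hi)
  by_cases h1 : b.length = 1
  · refine ⟨[0], by simp [h1], by simp, ?_, by simp [hjcf], ?_⟩
    · intro j hj hj'; simp at hj'; omega
    · intro i hi
      simp only [List.length_singleton] at hi
      interval_cases i
      have h0 : ([0] : List ℤ).getD 0 0 = 0 := rfl
      rw [h0]
      linarith [hbge 0 hk]
  · have hk2 : 2 ≤ b.length := by omega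
    refine ⟨1 :: (List.replicate (b.length - 2) 2 ++ [1]), ?_, ?_, ?_, ?_, ?_⟩
    · simp; omega
    · intro x hx
      simp [List.mem_replicate] at hx
      rcases hx with h | h | h <;> omega
    · intro j hj hj'
      obtain ⟨j', rfl⟩ : ∃ j', j = j' + 1 := ⟨j - 1, by omega⟩
      rw [List.drop_succ_cons]
      simp at hj'
      rw [dropT _ _ (by omega), hjT]
      norm_num
    · rw [show hjcf (1 :: (List.replicate (b.length - 2) 2 ++ [1])) =
        (1 : ℚ) - (hjcf (List.replicate (b.length - 2) 2 ++ [1]))⁻¹ from rfl, hjT]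
      norm_num
    · intro i hi
      refine le_trans ?_ (hbge i ?_)
      · set n : List ℤ := 1 :: (List.replicate (b.length - 2) 2 ++ [1]) with hn
        have hx : ∀ x ∈ n, x ≤ 2 := by
          intro x hx
          simp [hn, List.mem_replicate] at hx
          rcases hx with h | h | h <;> omega
        rw [List.getD_eq_getElem n 0 hi]
        exact hx _ (List.getElem_mem hi)
      · simp at hi ⊢; omega
end

section
/- If (n_1,...,n_k) ∈ Z_k is an admissible positive tuple with [n_1,...,n_k] = 0 and hgt(n) = 1, then n = ψ_j(u_{k-1}) for some 1 ≤ j ≤ k-2, i.e., n is a single strict blowup of (1,2,...,2,1) at an interior position. -/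
lemma psi_length : ∀ (j : ℕ) (l : List ℤ), 1 ≤ j → j ≤ l.length →
    (psi j l).length = l.length + 1
  | 0, _, h, _ => by omega
  | 1, [], _, h => by simp at h
  | 1, [a], _, _ => by simp [psi]
  | 1, a :: b :: t, _, _ => by simp [psi]
  | j + 2, [], _, h => by simp at h
  | j + 2, a :: t, _, h => by
      have := psi_length (j + 1) t (by omega) (by simpa using h)
      simp [psi, this]

lemma psi_concat : ∀ (xs : List ℤ) (c : ℤ),
    psi (xs.length + 1) (xs ++ [c]) = xs ++ [c + 1, 1]
  | [], c => by simp [psi]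
  | a :: xs, c => by
      have := psi_concat xs c
      simp [psi, this]

lemma uTuple_length (l : ℕ) : (uTuple l).length = if l ≤ 1 then 1 else l := by
  unfold uTuple
  split <;> simp <;> omega

lemma psi_top (l : ℕ) (hl : 1 ≤ l) :
    psi (uTuple l).length (uTuple l) = uTuple (l + 1) := by
  rcases Nat.lt_or_ge l 2 with h | h
  · interval_cases l
    simp [uTuple, psi]
  · have h1 : uTuple l = (1 :: List.replicate (l - 2) 2) ++ [1] := by
      simp [uTuple]; omega
    have h2 : (uTuple l).length = (1 :: List.replicate (l - 2) (2 : ℤ)).length + 1 := by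
      rw [h1]; simp
    rw [h2, h1, psi_concat]
    have h3 : uTuple (l + 1) = 1 :: (List.replicate (l - 1) 2 ++ [1]) := by
      simp [uTuple]; omega
    rw [h3]
    have h4 : l - 1 = (l - 2) + 1 := by omega
    rw [h4, List.replicate_succ' (n := l - 2)]
    simp

/-- A positive tuple in `Z_k` of height 1 is a single strict blowup of
`u_{k-1} = (1,2,…,2,1)` at an interior position `1 ≤ j ≤ k-2`. -/
theorem hgt_one_is_blowup_of_u (n : List ℤ) (k : ℕ) (hk : n.length = k)
    (hpos : ∀ x ∈ n, 0 < x) (hadm : Admissible n) (hcf : hjcf n = 0)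
    (hhgt : hgt n = 1) :
    ∃ j : ℕ, 1 ≤ j ∧ j ≤ k - 2 ∧ n = psi j (uTuple (k - 1)) := by
  have hne : {s | ∃ l : ℕ, 1 ≤ l ∧ ReachesIn s (uTuple l) n}.Nonempty := by
    by_contra h
    rw [Set.not_nonempty_iff_eq_empty] at h
    rw [hgt, h, Nat.sInf_empty] at hhgt
    exact one_ne_zero hhgt.symm
  unfold hgt at hhgt
  have h1 := Nat.sInf_mem hne
  rw [hhgt] at h1
  obtain ⟨l, hl, hr⟩ := h1
  cases hr with
  | step j hj hj' h0 =>
    cases h0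
    rcases eq_or_lt_of_le hj' with hje | hjl
    · -- j is the last position: psi j (uTuple l) = uTuple (l+1), so hgt = 0, contradiction
      exfalso
      have hn : psi j (uTuple l) = uTuple (l + 1) := by
        rw [hje, psi_top l hl]
      have h0mem : 0 ∈ {s | ∃ l' : ℕ, 1 ≤ l' ∧ ReachesIn s (uTuple l') (psi j (uTuple l))} :=
        ⟨l + 1, by omega, hn ▸ ReachesIn.refl _⟩
      have := Nat.sInf_le h0mem
      omega
    · have hlen := uTuple_length l
      have hl2 : 2 ≤ l := by
        by_contra h
        have : l = 1 := by omega
        rw [this] at hjl hlen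
        simp at hlen
        omega
      have hlen2 : (uTuple l).length = l := by rw [hlen]; simp; omega
      have hk2 : k = l + 1 := by
        rw [← hk, psi_length j (uTuple l) hj hj', hlen2]
      refine ⟨j, hj, by omega, ?_⟩
      have : k - 1 = l := by omega
      rw [this]
end
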